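/- arXiv:2504.08936 — 10 statements merged into one kernel-verified Lean document; each statement's English description precedes it below -/
import Mathlib

section
/- Let $G$ be a $(P_4 \cup P_1)$-free graph and $S$ a cutset of $G$. Let $x \in S$ and let $y$ be a neighbor of $x$ lying in $G-S$. Suppose $G-S$ has a vertex $z$ such that $z$ is not adjacent to $x$, $z$ is not adjacent to $y$, and some component of $G-S$ containing neither $y$ nor $z$ contains a neighbor of $x$. Then $x$ is adjacent to every vertex of every component of $G-S$ to which $x$ has at least one neighbor, with the possible exception of the component containing $z$. -/
/-!
Suppose `x` has a neighbour in a component `C ≠ C(z)` of `G - S` but is not complete to it.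
Walking inside `C` from a neighbour of `x` to a non-neighbour gives an edge `ab` of `C` with
`x ~ a`, `x ≁ b`. Some neighbour `p` of `x` lies outside `C` and is not adjacent to `z`: the
neighbour `u` of `x` from the hypothesis if it lies outside `C`, and `y` otherwise. Then `p x a b`
is an induced `P₄` and `z` has no neighbour on it, contradicting `P₄ ∪ P₁`-freeness.
-/

open SimpleGraph

/-- The number of connected components of `G - S`. -/
noncomputable def ncomps {V : Type*} (G : SimpleGraph V) (S : Set V) : ℕ :=
  Nat.card (G.induce Sᶜ).ConnectedComponent

/-- The graph `P₄ ∪ P₁`: a path on four vertices plus an isolated vertex. -/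
def P4P1 : SimpleGraph (Fin 5) :=
  SimpleGraph.fromEdgeSet {s((0 : Fin 5), (1 : Fin 5)), s((1 : Fin 5), (2 : Fin 5)),
    s((2 : Fin 5), (3 : Fin 5))}

/-- `G` has no induced subgraph isomorphic to `P₄ ∪ P₁`. -/
def P4P1Free {V : Type*} (G : SimpleGraph V) : Prop := IsEmpty (P4P1 ↪g G)

/-- `G` has no induced subgraph isomorphic to `P₄`. -/
def P4Free {V : Type*} (G : SimpleGraph V) : Prop := IsEmpty (SimpleGraph.pathGraph 4 ↪g G)

/-- `G` is `t`-tough. -/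
def Tough {V : Type*} (t : ℝ) (G : SimpleGraph V) : Prop :=
  ∀ S : Set V, 2 ≤ ncomps G S → t * (ncomps G S : ℝ) ≤ (S.ncard : ℝ)

/-- `S` is a cutset of `G`, i.e. `G - S` is disconnected. -/
def IsCutset {V : Type*} (G : SimpleGraph V) (S : Set V) : Prop :=
  2 ≤ ncomps G S

/-- `S` is a scattering set of `G`. -/
def IsScatSet {V : Type*} (G : SimpleGraph V) (S : Set V) : Prop :=
  2 ≤ ncomps G S ∧ ∀ T : Set V, 2 ≤ ncomps G T →
    (ncomps G T : ℤ) - (T.ncard : ℤ) ≤ (ncomps G S : ℤ) - (S.ncard : ℤ)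

/-- `S` is a maximal scattering set of `G`. -/
def IsMaxScatSet {V : Type*} (G : SimpleGraph V) (S : Set V) : Prop :=
  IsScatSet G S ∧ ∀ T : Set V, IsScatSet G T → S ⊆ T → S = T

/-- `G` is `t`-tough with respect to `S`. -/
def ToughWrt {V : Type*} (t : ℝ) (G : SimpleGraph V) (S : Set V) : Prop :=
  ∀ W : Set V, 2 ≤ ncomps G W →
    (∀ c : (G.induce Sᶜ).ConnectedComponent,
      ∃ v : ↥Sᶜ, (G.induce Sᶜ).connectedComponentMk v = c ∧ (v : V) ∉ W) →
    t * (ncomps G W : ℝ) ≤ (W.ncard : ℝ)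

namespace SimpleGraph

variable {V : Type*} {G : SimpleGraph V}

lemma Reachable.exists_boundary_adj {u v : V} (h : G.Reachable u v) {s : Set V}
    (hu : u ∈ s) (hv : v ∉ s) :
    ∃ a b, G.Reachable u a ∧ G.Adj a b ∧ a ∈ s ∧ b ∉ s := by
  classical
  obtain ⟨p⟩ := h
  obtain ⟨d, hd, hds⟩ := p.exists_boundary_dart s hu hv
  exact ⟨d.fst, d.snd, ⟨p.takeUntil d.fst (p.dart_fst_mem_support_of_mem_darts hd)⟩, d.adj,
    hds⟩

lemma induce_not_adj_of_connectedComponentMk_ne {s : Set V} {a b : s}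
    (h : (G.induce s).connectedComponentMk a ≠ (G.induce s).connectedComponentMk b) :
    ¬ G.Adj a b :=
  fun hab => h (ConnectedComponent.connectedComponentMk_eq_of_adj hab)

lemma injective_of_adj_iff {W : Type*} {H : SimpleGraph W} {f : W → V}
    (hf : ∀ i j, G.Adj (f i) (f j) ↔ H.Adj i j)
    (hH : ∀ i j, (∀ k, H.Adj i k ↔ H.Adj j k) → i = j) :
    Function.Injective f := fun i j hij =>
  hH i j fun k => by rw [← hf, ← hf, hij]

end SimpleGraph

lemma P4P1_eq_of_forall_adj_iff (i j : Fin 5) (h : ∀ k, P4P1.Adj i k ↔ P4P1.Adj j k) :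
    i = j := by
  fin_cases i <;> fin_cases j <;>
    first
      | rfl
      | (have := h 0; have := h 1; have := h 2; have := h 3; simp [P4P1] at *)

theorem P4P1Free.adj_of_induced_path {V : Type*} {G : SimpleGraph V} (hfree : P4P1Free G)
    {a b c d : V} (hab : G.Adj a b) (hbc : G.Adj b c) (hcd : G.Adj c d)
    (hac : ¬ G.Adj a c) (had : ¬ G.Adj a d) (hbd : ¬ G.Adj b d) (e : V) :
    G.Adj e a ∨ G.Adj e b ∨ G.Adj e c ∨ G.Adj e d := by
  by_contra! he
  obtain ⟨hea, heb, hec, hed⟩ := he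
  let f : Fin 5 → V := ![a, b, c, d, e]
  have hf : ∀ i j, G.Adj (f i) (f j) ↔ P4P1.Adj i j := by
    intro i j
    fin_cases i <;> fin_cases j <;>
      simp [f, P4P1, *, hab.symm, hbc.symm, hcd.symm, G.adj_comm _ e, G.adj_comm c a,
        G.adj_comm d a, G.adj_comm d b]
  exact hfree.elim ⟨⟨f, injective_of_adj_iff hf P4P1_eq_of_forall_adj_iff⟩, hf _ _⟩

theorem stmt1_general {V : Type*} (G : SimpleGraph V) (hfree : P4P1Free G)
    (S : Set V) (x : V) (y z : ↥Sᶜ)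
    (hxy : G.Adj x (y : V)) (hxz : ¬ G.Adj x (z : V)) (hyz : ¬ G.Adj (y : V) (z : V))
    (hD : ∃ u : ↥Sᶜ,
      (G.induce Sᶜ).connectedComponentMk u ≠ (G.induce Sᶜ).connectedComponentMk y ∧
      (G.induce Sᶜ).connectedComponentMk u ≠ (G.induce Sᶜ).connectedComponentMk z ∧
      G.Adj x (u : V)) :
    ∀ w : ↥Sᶜ,
      (G.induce Sᶜ).connectedComponentMk w ≠ (G.induce Sᶜ).connectedComponentMk z →
      (∃ u : ↥Sᶜ, (G.induce Sᶜ).connectedComponentMk u = (G.induce Sᶜ).connectedComponentMk w ∧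
        G.Adj x (u : V)) →
      G.Adj x (w : V) := by
  set C := (G.induce Sᶜ).connectedComponentMk
  rintro w hwz ⟨v, hvw, hxv⟩
  by_contra hxw
  obtain ⟨a, b, hva, hab, hxa, hxb⟩ :=
    (ConnectedComponent.exact hvw).exists_boundary_adj (s := {t | G.Adj x t}) hxv hxw
  have ha : C a = C w := (ConnectedComponent.sound hva).symm.trans hvw
  have hb : C b = C w := (ConnectedComponent.connectedComponentMk_eq_of_adj hab).symm.trans ha
  obtain ⟨p, hxp, hpz, hpw⟩ : ∃ p : ↥Sᶜ, G.Adj x p ∧ ¬ G.Adj p z ∧ C p ≠ C w := by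
    obtain ⟨u, huy, huz, hxu⟩ := hD
    by_cases huw : C u = C w
    · exact ⟨y, hxy, hyz, fun h => huy (huw.trans h.symm)⟩
    · exact ⟨u, hxu, induce_not_adj_of_connectedComponentMk_ne huz, huw⟩
  rcases hfree.adj_of_induced_path hxp.symm hxa hab
      (induce_not_adj_of_connectedComponentMk_ne fun h => hpw (h.trans ha))
      (induce_not_adj_of_connectedComponentMk_ne fun h => hpw (h.trans hb)) hxb z
    with h | h | h | h
  · exact hpz h.symm
  · exact hxz h.symm
  · exact induce_not_adj_of_connectedComponentMk_ne (fun h => hwz (ha.symm.trans h.symm)) h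
  · exact induce_not_adj_of_connectedComponentMk_ne (fun h => hwz (hb.symm.trans h.symm)) h

theorem stmt1 {V : Type*} [Fintype V] (G : SimpleGraph V) (hfree : P4P1Free G)
    (S : Set V) (hS : IsCutset G S)
    (x : V) (hx : x ∈ S) (y z : ↥Sᶜ)
    (hxy : G.Adj x (y : V)) (hxz : ¬ G.Adj x (z : V)) (hyz : ¬ G.Adj (y : V) (z : V))
    (hD : ∃ u : ↥Sᶜ,
      (G.induce Sᶜ).connectedComponentMk u ≠ (G.induce Sᶜ).connectedComponentMk y ∧
      (G.induce Sᶜ).connectedComponentMk u ≠ (G.induce Sᶜ).connectedComponentMk z ∧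
      G.Adj x (u : V)) :
    ∀ w : ↥Sᶜ,
      (G.induce Sᶜ).connectedComponentMk w ≠ (G.induce Sᶜ).connectedComponentMk z →
      (∃ u : ↥Sᶜ, (G.induce Sᶜ).connectedComponentMk u = (G.induce Sᶜ).connectedComponentMk w ∧
        G.Adj x (u : V)) →
      G.Adj x (w : V) :=
  stmt1_general G hfree S x y z hxy hxz hyz hD
end

section
/- Let $G$ be a $P_4$-free graph and $S$ a cutset of $G$ such that each vertex of $S$ has, in $G$, neighbors in at least two distinct components of $G-S$. Then for every $x \in S$ and every component $D$ of $G-S$, if $x$ has a neighbor in $D$ then $x$ is adjacent to every vertex of $D$. -/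
open SimpleGraph

/-! If `x ∈ S` is adjacent to `a` but not to a neighbour `b` of `a` in `G - S`, then a neighbour
`v` of `x` in another component of `G - S` yields the induced path `v - x - a - b`. So in a
`P₄`-free graph the neighbourhood of `x` inside a component is closed under adjacency, hence is
empty or the whole component. -/

theorem P4Free.adj_of_adj_of_adj {V : Type*} {G : SimpleGraph V} (hfree : P4Free G)
    {v x a b : V} (hvx : G.Adj v x) (hxa : G.Adj x a) (hab : G.Adj a b) (hva : ¬G.Adj v a)
    (hvb : ¬G.Adj v b) (hne_va : v ≠ a) (hne_xb : x ≠ b) : G.Adj x b := by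
  by_contra hxb
  have hne_vb : v ≠ b := by rintro rfl; exact hva hab.symm
  let f : Fin 4 → V := ![v, x, a, b]
  have hinj : Function.Injective f := by
    intro i j hij
    fin_cases i <;> fin_cases j <;>
      simp_all [f, hvx.ne, hxa.ne, hab.ne, hvx.ne.symm, hxa.ne.symm, hab.ne.symm,
        hne_va.symm, hne_vb.symm, hne_xb.symm]
  refine hfree.elim ⟨⟨f, hinj⟩, fun {i j} => ?_⟩
  fin_cases i <;> fin_cases j <;>
    simp [f, pathGraph, hvx, hxa, hab, hvx.symm, hxa.symm, hab.symm, hva, hvb, hxb,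
      G.adj_comm _ v, G.adj_comm b x, Order.covBy_iff_add_one_eq]

section Cutset

variable {V : Type*} {G : SimpleGraph V} {S : Set V}

theorem adj_of_adj_of_induce_compl_adj (hfree : P4Free G) {x : V} (hx : x ∈ S) {v a b : ↥Sᶜ}
    (hxv : G.Adj x v)
    (hva : (G.induce Sᶜ).connectedComponentMk v ≠ (G.induce Sᶜ).connectedComponentMk a)
    (hxa : G.Adj x a) (hab : (G.induce Sᶜ).Adj a b) : G.Adj x b := by
  have hvb : (G.induce Sᶜ).connectedComponentMk v ≠ (G.induce Sᶜ).connectedComponentMk b :=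
    fun h => hva (h.trans (ConnectedComponent.sound hab.reachable).symm)
  refine hfree.adj_of_adj_of_adj hxv.symm hxa hab
    (fun h => hva (ConnectedComponent.sound (Adj.reachable (G := G.induce Sᶜ) h)))
    (fun h => hvb (ConnectedComponent.sound (Adj.reachable (G := G.induce Sᶜ) h)))
    (fun h => hva (congrArg _ (Subtype.ext h))) (fun h => b.2 (h ▸ hx))

theorem adj_of_adj_of_induce_compl_reachable (hfree : P4Free G) {x : V} (hx : x ∈ S)
    {v u w : ↥Sᶜ} (hxv : G.Adj x v)
    (hvu : (G.induce Sᶜ).connectedComponentMk v ≠ (G.induce Sᶜ).connectedComponentMk u)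
    (hxu : G.Adj x u) (huw : (G.induce Sᶜ).Reachable u w) : G.Adj x w := by
  have hpath := (reachable_iff_reflTransGen u w).1 huw
  clear huw
  induction hpath with
  | refl => exact hxu
  | @tail a b hua hab ih =>
    have hva : (G.induce Sᶜ).connectedComponentMk v ≠ (G.induce Sᶜ).connectedComponentMk a :=
      fun h => hvu (h.trans (ConnectedComponent.sound ((reachable_iff_reflTransGen u a).2 hua)).symm)
    exact adj_of_adj_of_induce_compl_adj hfree hx hxv hva ih hab

end Cutset

theorem stmt2_general {V : Type*} (G : SimpleGraph V) (hfree : P4Free G)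
    (S : Set V)
    (htwo : ∀ x ∈ S, ∃ u v : ↥Sᶜ, G.Adj x (u : V) ∧ G.Adj x (v : V) ∧
      (G.induce Sᶜ).connectedComponentMk u ≠ (G.induce Sᶜ).connectedComponentMk v) :
    ∀ x ∈ S, ∀ w u : ↥Sᶜ,
      (G.induce Sᶜ).connectedComponentMk u = (G.induce Sᶜ).connectedComponentMk w →
      G.Adj x (u : V) → G.Adj x (w : V) := by
  intro x hx w u huw hxu
  obtain ⟨v, hxv, hvu⟩ : ∃ v : ↥Sᶜ, G.Adj x v ∧
      (G.induce Sᶜ).connectedComponentMk v ≠ (G.induce Sᶜ).connectedComponentMk u := by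
    obtain ⟨v₁, v₂, hxv₁, hxv₂, hne⟩ := htwo x hx
    by_cases h : (G.induce Sᶜ).connectedComponentMk v₁ = (G.induce Sᶜ).connectedComponentMk u
    · exact ⟨v₂, hxv₂, fun h₂ => hne (h.trans h₂.symm)⟩
    · exact ⟨v₁, hxv₁, h⟩
  exact adj_of_adj_of_induce_compl_reachable hfree hx hxv hvu hxu (ConnectedComponent.exact huw)

theorem stmt2 {V : Type*} [Fintype V] (G : SimpleGraph V) (hfree : P4Free G)
    (S : Set V) (hS : IsCutset G S)
    (htwo : ∀ x ∈ S, ∃ u v : ↥Sᶜ, G.Adj x (u : V) ∧ G.Adj x (v : V) ∧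
      (G.induce Sᶜ).connectedComponentMk u ≠ (G.induce Sᶜ).connectedComponentMk v) :
    ∀ x ∈ S, ∀ w u : ↥Sᶜ,
      (G.induce Sᶜ).connectedComponentMk u = (G.induce Sᶜ).connectedComponentMk w →
      G.Adj x (u : V) → G.Adj x (w : V) :=
  stmt2_general G hfree S htwo
end

section
/- Let $G$ be a $P_4$-free graph and $S$ a cutset of $G$ such that each vertex of $S$ has, in $G$, neighbors in at least two distinct components of $G-S$. If $S^* \subseteq S$ is a minimal cutset of $G$, then every vertex of $S^*$ is adjacent to every vertex of $G-S^*$. -/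
open SimpleGraph

/-!
By minimality, deleting a vertex `x` of the minimal cutset `S'` must reconnect the graph, so `x`
has a neighbour in every component of `G - S'`. If `x` missed some `v ∉ S'`, walk inside the
component of `v` towards a neighbour of `x`: the first step from a non-neighbour `w₁` to a
neighbour `w₂` of `x`, followed by `x` and a neighbour `a` of `x` in another component, gives an
induced path `w₁ w₂ x a`.
-/

section

variable {V : Type*} {G : SimpleGraph V}

theorem not_p4Free_of_induced_path {a b c d : V} (hab : G.Adj a b) (hbc : G.Adj b c)
    (hcd : G.Adj c d) (hac : ¬G.Adj a c) (hbd : ¬G.Adj b d) (had : ¬G.Adj a d) :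
    ¬P4Free G := by
  have hac' : a ≠ c := by rintro rfl; exact had hcd
  have hbd' : b ≠ d := by rintro rfl; exact had hab
  have had' : a ≠ d := by rintro rfl; exact hac hcd.symm
  refine fun hfree => hfree.elim ⟨⟨![a, b, c, d], fun i j hij => ?_⟩, fun {i j} => ?_⟩
  · fin_cases i <;> fin_cases j <;>
      simp_all [hab.ne, hbc.ne, hcd.ne, hab.ne.symm, hbc.ne.symm, hcd.ne.symm, hac'.symm,
        hbd'.symm, had'.symm]
  · change G.Adj (![a, b, c, d] i) (![a, b, c, d] j) ↔ _
    fin_cases i <;> fin_cases j <;>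
      simp [pathGraph_adj, hab, hbc, hcd, hab.symm, hbc.symm, hcd.symm, hac, hbd, had,
        G.adj_comm c a, G.adj_comm d a, G.adj_comm d b]

theorem isCutset_diff_singleton [Finite V] {S : Set V} {x : V} (hx : x ∈ S)
    {c : (G.induce Sᶜ).ConnectedComponent}
    (hc : ∀ u : ↥Sᶜ, (G.induce Sᶜ).connectedComponentMk u = c → ¬G.Adj x u) :
    IsCutset G (S \ {x}) := by
  obtain ⟨v, rfl⟩ := c.exists_rep
  have hv : (v : V) ∈ (S \ {x})ᶜ := fun h => v.2 h.1
  have hx' : x ∈ (S \ {x})ᶜ := fun h => h.2 rfl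
  suffices ¬(G.induce (S \ {x})ᶜ).Reachable ⟨v, hv⟩ ⟨x, hx'⟩ from
    Finite.one_lt_card_iff_nontrivial.mpr <|
      nontrivial_of_ne _ _ fun h => this (ConnectedComponent.exact h)
  rintro ⟨p⟩
  -- `p` avoids `S \ {x}`, so it can only leave the component of `v` in `G - S` through `x`.
  obtain ⟨d, -, ⟨hS, hd⟩, hleave⟩ := p.exists_boundary_dart
    {w | ∃ h : (w : V) ∈ Sᶜ,
      (G.induce Sᶜ).connectedComponentMk ⟨w, h⟩ = (G.induce Sᶜ).connectedComponentMk v}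
    ⟨v.2, rfl⟩ fun ⟨h, _⟩ => h hx
  have hadj : G.Adj d.fst d.snd := d.adj
  have hne : (d.snd : V) ≠ x := fun h => hc _ hd (by rw [h] at hadj; exact hadj.symm)
  have hsnd : (d.snd : V) ∈ Sᶜ := fun h => d.snd.2 ⟨h, hne⟩
  exact hleave ⟨hsnd, (ConnectedComponent.connectedComponentMk_eq_of_adj
    (show (G.induce Sᶜ).Adj ⟨d.fst, hS⟩ ⟨d.snd, hsnd⟩ from hadj)).symm.trans hd⟩

theorem exists_adj_of_minimal_cutset [Finite V] {S : Set V}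
    (hmin : ∀ T : Set V, T ⊂ S → ¬IsCutset G T) {x : V} (hx : x ∈ S)
    (c : (G.induce Sᶜ).ConnectedComponent) :
    ∃ u : ↥Sᶜ, G.Adj x u ∧ (G.induce Sᶜ).connectedComponentMk u = c := by
  by_contra! h
  exact hmin _ (Set.sdiff_singleton_ssubset.mpr hx)
    (isCutset_diff_singleton hx fun u hu hxu => h u hxu hu)

theorem P4Free.adj_of_forall_exists_adj (hfree : P4Free G) {s : Set V}
    [Nontrivial (G.induce s).ConnectedComponent] {x : V}
    (hx : ∀ c : (G.induce s).ConnectedComponent,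
      ∃ u : s, G.Adj x u ∧ (G.induce s).connectedComponentMk u = c)
    (v : s) : G.Adj x v := by
  classical
  by_contra hxv
  set H := G.induce s
  obtain ⟨c, hc⟩ := exists_ne (H.connectedComponentMk v)
  obtain ⟨a, hxa, rfl⟩ := hx c
  obtain ⟨u, hxu, hu⟩ := hx (H.connectedComponentMk v)
  obtain ⟨p⟩ := ConnectedComponent.exact hu.symm
  obtain ⟨d, hd, hfst, hsnd⟩ := p.exists_boundary_dart {w | ¬G.Adj x w} hxv (not_not.mpr hxu)
  have hfst_mk : H.connectedComponentMk d.fst = H.connectedComponentMk v :=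
    (ConnectedComponent.sound
      (p.takeUntil _ (p.dart_fst_mem_support_of_mem_darts hd)).reachable).symm
  have hsnd_mk : H.connectedComponentMk d.snd = H.connectedComponentMk v :=
    (ConnectedComponent.connectedComponentMk_eq_of_adj d.adj).symm.trans hfst_mk
  have not_adj_a : ∀ w : s, H.connectedComponentMk w = H.connectedComponentMk v → ¬G.Adj w a :=
    fun w hw hwa => hc (hw ▸ (ConnectedComponent.connectedComponentMk_eq_of_adj
      (show H.Adj w a from hwa)).symm)
  have hadj : G.Adj d.fst d.snd := d.adj
  -- `d.fst - d.snd - x - a` is an induced `P₄`.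
  exact not_p4Free_of_induced_path hadj (not_not.mp hsnd).symm hxa (fun h => hfst h.symm)
    (not_adj_a _ hsnd_mk) (not_adj_a _ hfst_mk) hfree

end

theorem stmt3_general {V : Type*} [Fintype V] (G : SimpleGraph V) (hfree : P4Free G)
    (S' : Set V)
    (hcut : IsCutset G S') (hmin : ∀ T : Set V, T ⊂ S' → ¬ IsCutset G T) :
    ∀ x ∈ S', ∀ v ∉ S', G.Adj x v := by
  have : Nontrivial (G.induce S'ᶜ).ConnectedComponent :=
    Finite.one_lt_card_iff_nontrivial.mp hcut
  exact fun x hx v hv =>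
    hfree.adj_of_forall_exists_adj (exists_adj_of_minimal_cutset hmin hx) ⟨v, hv⟩

theorem stmt3 {V : Type*} [Fintype V] (G : SimpleGraph V) (hfree : P4Free G)
    (S : Set V) (hS : IsCutset G S)
    (htwo : ∀ x ∈ S, ∃ u v : ↥Sᶜ, G.Adj x (u : V) ∧ G.Adj x (v : V) ∧
      (G.induce Sᶜ).connectedComponentMk u ≠ (G.induce Sᶜ).connectedComponentMk v)
    (S' : Set V) (hsub : S' ⊆ S)
    (hcut : IsCutset G S') (hmin : ∀ T : Set V, T ⊂ S' → ¬ IsCutset G T) :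
    ∀ x ∈ S', ∀ v ∉ S', G.Adj x v :=
  stmt3_general G hfree S' hcut hmin
end

section
/- Let $G$ be a non-complete graph with scattering number $s(G) \ge 0$ and let $S \subseteq V(G)$ be a maximal scattering set of $G$. Then for every nonempty proper subset $S_1$ of $S$, at least $|S_1|+1$ distinct components of $G-S$ contain a neighbor of some vertex of $S_1$. -/
open SimpleGraph

/-!
Put `T = S \ S₁`. A component of `G - S` with no neighbour in `S₁` is still a component of
`G - T`, and these components are distinct from the component of `G - T` containing a vertex
of `S₁`. Hence `c(G - T) ≥ m + 1`, where `m` counts the components of `G - S` without a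
neighbour in `S₁`. If `G - T` is disconnected, comparing `c(G - T) - |T|` with the maximum
`c(G - S) - |S|` gives `|S₁| + 1 ≤ c(G - S) - m`; otherwise `m = 0` and the hypothesis
`|S| ≤ c(G - S)` suffices.
-/

section

variable {V : Type*} (G : SimpleGraph V)

def neighborComponents (S A : Set V) : Set (G.induce Sᶜ).ConnectedComponent :=
  {c | ∃ u : ↥Sᶜ, (G.induce Sᶜ).connectedComponentMk u = c ∧ ∃ x ∈ A, G.Adj x (u : V)}

def componentMapSdiff (S A : Set V) :
    (G.induce Sᶜ).ConnectedComponent → (G.induce (S \ A)ᶜ).ConnectedComponent :=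
  ConnectedComponent.map (G.induceHomOfLE (Set.compl_subset_compl.mpr Set.sdiff_subset)).toHom

variable {G}

lemma exists_connectedComponentMk_eq_of_componentMapSdiff_eq {S A : Set V}
    {c : (G.induce Sᶜ).ConnectedComponent} (hc : c ∉ neighborComponents G S A)
    {w : ↥(S \ A)ᶜ}
    (hw : componentMapSdiff G S A c = (G.induce (S \ A)ᶜ).connectedComponentMk w) :
    ∃ hwS : (w : V) ∈ Sᶜ, (G.induce Sᶜ).connectedComponentMk ⟨w, hwS⟩ = c := by
  obtain ⟨v, rfl⟩ := c.exists_rep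
  have hreach := (reachable_iff_reflTransGen _ _).mp (ConnectedComponent.exact hw)
  clear hw
  induction hreach with
  | refl => exact ⟨v.2, rfl⟩
  | @tail b b' _ hadj ih =>
    obtain ⟨hbS, hb⟩ := ih
    have hb'S : (b' : V) ∈ Sᶜ := by
      intro hb'
      have hb'A : (b' : V) ∈ A := by_contra fun h => b'.2 ⟨hb', h⟩
      exact hc ⟨⟨b, hbS⟩, hb, b', hb'A, hadj.symm⟩
    have hadjS : (G.induce Sᶜ).Adj ⟨b', hb'S⟩ ⟨b, hbS⟩ := hadj.symm
    exact ⟨hb'S, (ConnectedComponent.sound hadjS.reachable).trans hb⟩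

lemma ncard_compl_neighborComponents_add_one_le [Finite V] {S A : Set V} (hA : A ⊆ S)
    {x : V} (hx : x ∈ A) :
    (neighborComponents G S A)ᶜ.ncard + 1 ≤ ncomps G (S \ A) := by
  set φ := componentMapSdiff G S A
  have hxT : x ∈ (S \ A)ᶜ := fun h => h.2 hx
  have hinj : Set.InjOn φ (neighborComponents G S A)ᶜ := by
    intro c₁ hc₁ c₂ _ h
    obtain ⟨v₂, rfl⟩ := c₂.exists_rep
    obtain ⟨_, hv₂⟩ := exists_connectedComponentMk_eq_of_componentMapSdiff_eq hc₁ h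
    exact hv₂.symm
  have hx_notMem : (G.induce (S \ A)ᶜ).connectedComponentMk ⟨x, hxT⟩ ∉
      φ '' (neighborComponents G S A)ᶜ := by
    rintro ⟨c, hc, h⟩
    obtain ⟨hxS, -⟩ := exists_connectedComponentMk_eq_of_componentMapSdiff_eq hc h
    exact hxS (hA hx)
  calc (neighborComponents G S A)ᶜ.ncard + 1
      = (insert _ (φ '' (neighborComponents G S A)ᶜ)).ncard := by
        rw [Set.ncard_insert_of_notMem hx_notMem, hinj.ncard_image]
    _ ≤ ncomps G (S \ A) := Set.ncard_le_card _

end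

theorem stmt5 {V : Type*} [Fintype V] (G : SimpleGraph V)
    (S : Set V) (hS : IsMaxScatSet G S) (h0 : S.ncard ≤ ncomps G S)
    (S1 : Set V) (hne : S1.Nonempty) (hss : S1 ⊂ S) :
    S1.ncard + 1 ≤
      {c : (G.induce Sᶜ).ConnectedComponent |
        ∃ u : ↥Sᶜ, (G.induce Sᶜ).connectedComponentMk u = c ∧
          ∃ x ∈ S1, G.Adj x (u : V)}.ncard := by
  change S1.ncard + 1 ≤ (neighborComponents G S S1).ncard
  obtain ⟨x, hx⟩ := hne
  have hcomps := ncard_compl_neighborComponents_add_one_le (G := G) hss.subset hx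
  have hsplit : (neighborComponents G S S1).ncard + (neighborComponents G S S1)ᶜ.ncard =
      ncomps G S := Set.ncard_add_ncard_compl _
  have hsdiff := Set.ncard_sdiff_add_ncard_of_subset hss.subset
  have hlt := Set.ncard_lt_ncard hss
  by_cases hdisc : 2 ≤ ncomps G (S \ S1)
  · have := hS.1.2 _ hdisc
    omega
  · omega
end

section
/- Let $G$ be a non-complete graph with scattering number $s(G) \ge 0$ and let $S \subseteq V(G)$ be a maximal scattering set of $G$. Then every component $D$ of $G-S$ is either a complete graph or satisfies $s(D) \le 0$. -/
/-!
Suppose some `X ⊆ D` had `c(D - X) > |X|` and put `T = S ∪ X`. The components of `G - S` other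
than `D` are still components of `G - T`, and distinct components of `D - X` stay apart in
`G - T`, so `c(G - T) ≥ c(G - S) - 1 + c(D - X)`. Hence `c(G - T) ≥ 3` and
`c(G - T) - |T| ≥ c(G - S) - |S| = s(G)`: `T` is a scattering set containing `S`. By maximality
`T = S`, and then the same count gives `c(D - X) ≤ 1`, a contradiction. So the second alternative
always holds.
-/

open SimpleGraph

section

variable {V W : Type*}

namespace SimpleGraph

def induceUnionComplIso (G : SimpleGraph V) (S T : Set V) :
    G.induce (S ∪ T)ᶜ ≃g (G.induce Sᶜ).induce (Subtype.val ⁻¹' T)ᶜ where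
  toFun v := ⟨⟨v, fun h => v.2 (Or.inl h)⟩, fun h => v.2 (Or.inr h)⟩
  invFun v := ⟨v.1.1, fun h => h.elim v.1.2 v.2⟩
  left_inv _ := rfl
  right_inv _ := rfl
  map_rel_iff' := Iff.rfl

variable {H : SimpleGraph W}

def induceSuppComplHom (c : H.ConnectedComponent) (X : Set c.supp) :
    (H.induce c.supp).induce Xᶜ →g H.induce (Subtype.val '' X)ᶜ where
  toFun v := ⟨v.1.1, fun ⟨_, hx, hxv⟩ => v.2 (Subtype.val_injective hxv ▸ hx)⟩
  map_rel' h := h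

lemma map_induceSuppComplHom_injective (c : H.ConnectedComponent) (X : Set c.supp) :
    Function.Injective (ConnectedComponent.map (induceSuppComplHom c X)) := by
  classical
  refine ConnectedComponent.ind₂ fun u v huv => ConnectedComponent.sound ?_
  obtain ⟨p⟩ := ConnectedComponent.exact huv
  set q := p.map (Embedding.induce _).toHom
  have hc : ∀ x ∈ q.support, x ∈ c.supp := fun x hx =>
    (ConnectedComponent.sound ⟨(q.takeUntil x hx).reverse⟩).trans u.1.2
  have hX : ∀ x ∈ (q.induce c.supp hc).support, x ∈ Xᶜ := by
    intro x hx hxX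
    rw [Walk.support_induce, List.mem_attachWith] at hx
    obtain ⟨y, -, hy⟩ := List.mem_map.1 (Walk.support_map _ _ ▸ hx)
    exact y.2 ⟨x, hxX, hy.symm⟩
  exact ((q.induce c.supp hc).induce Xᶜ hX).reachable

end SimpleGraph

lemma ncomps_union (G : SimpleGraph V) (S T : Set V) :
    ncomps G (S ∪ T) = ncomps (G.induce Sᶜ) (Subtype.val ⁻¹' T) :=
  Nat.card_congr (induceUnionComplIso G S T).connectedComponentEquiv

lemma card_sub_one_add_ncomps_induce_supp_le {H : SimpleGraph W} [Finite W]
    (c : H.ConnectedComponent) (X : Set c.supp) :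
    Nat.card H.ConnectedComponent - 1 + ncomps (H.induce c.supp) X ≤
      ncomps H (Subtype.val '' X) := by
  have hXc : Subtype.val '' X ⊆ c.supp := Subtype.coe_image_subset _ _
  let ψ := ConnectedComponent.map (Embedding.induce (G := H) (Subtype.val '' X)ᶜ).toHom
  let F : {d // d ≠ c} ⊕ ((H.induce c.supp).induce Xᶜ).ConnectedComponent →
      (H.induce (Subtype.val '' X)ᶜ).ConnectedComponent :=
    Sum.elim (fun d => connectedComponentMk _ ⟨d.1.out, fun h => d.2 (d.1.out_eq ▸ hXc h)⟩)
      (ConnectedComponent.map (induceSuppComplHom c X))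
  have hψ_inl (d) : ψ (F (.inl d)) = d.1 := d.1.out_eq
  have hψ_inr (e) : ψ (F (.inr e)) = c := e.ind fun v => v.1.2
  have hF : Function.Injective F := by
    rintro (d | e) (d' | e') h
    · exact congrArg Sum.inl (Subtype.ext
        ((hψ_inl d).symm.trans ((congrArg ψ h).trans (hψ_inl d'))))
    · exact absurd ((hψ_inl d).symm.trans ((congrArg ψ h).trans (hψ_inr e'))) d.2
    · exact absurd ((hψ_inl d').symm.trans ((congrArg ψ h).symm.trans (hψ_inr e))) d'.2
    · exact congrArg Sum.inr (map_induceSuppComplHom_injective c X h)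
  calc Nat.card H.ConnectedComponent - 1 + ncomps (H.induce c.supp) X
      = Nat.card ({d // d ≠ c} ⊕ ((H.induce c.supp).induce Xᶜ).ConnectedComponent) := by
        have := Fintype.ofFinite H.ConnectedComponent
        classical
        simp [Nat.card_sum, Nat.card_eq_fintype_card, Fintype.card_subtype_compl, ncomps]
    _ ≤ ncomps H (Subtype.val '' X) := Nat.card_le_card_of_injective F hF

end

theorem stmt6_general {V : Type*} [Fintype V] (G : SimpleGraph V)
    (S : Set V) (hS : IsMaxScatSet G S)
    (c : (G.induce Sᶜ).ConnectedComponent) :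
    (∀ a b : ↥c.supp, a ≠ b → ((G.induce Sᶜ).induce c.supp).Adj a b) ∨
    (∀ X : Set ↥c.supp, 2 ≤ ncomps ((G.induce Sᶜ).induce c.supp) X →
      ncomps ((G.induce Sᶜ).induce c.supp) X ≤ X.ncard) := by
  refine Or.inr fun X hX => ?_
  by_contra! hlt
  set Y : Set V := Subtype.val '' (Subtype.val '' X)
  have hcount :
      ncomps G S - 1 + ncomps ((G.induce Sᶜ).induce c.supp) X ≤ ncomps G (S ∪ Y) := by
    rw [ncomps_union, Set.preimage_image_eq _ Subtype.val_injective]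
    exact card_sub_one_add_ncomps_induce_supp_le c X
  have hSY : Disjoint S Y := Set.disjoint_right.2 fun _ ⟨v, _, hv⟩ => hv ▸ v.2
  have hcard : (S ∪ Y).ncard = S.ncard + X.ncard := by
    rw [Set.ncard_union_eq hSY,
      Set.ncard_image_of_injective _ Subtype.val_injective,
      Set.ncard_image_of_injective _ Subtype.val_injective]
  have hS_cut := hS.1.1
  have hscat : IsScatSet G (S ∪ Y) :=
    ⟨by omega, fun T hT => (hS.1.2 T hT).trans (by omega)⟩
  rw [← hS.2 _ hscat Set.subset_union_left] at hcount
  omega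

theorem stmt6 {V : Type*} [Fintype V] (G : SimpleGraph V)
    (S : Set V) (hS : IsMaxScatSet G S) (h0 : S.ncard ≤ ncomps G S)
    (c : (G.induce Sᶜ).ConnectedComponent) :
    (∀ a b : ↥c.supp, a ≠ b → ((G.induce Sᶜ).induce c.supp).Adj a b) ∨
    (∀ X : Set ↥c.supp, 2 ≤ ncomps ((G.induce Sᶜ).induce c.supp) X →
      ncomps ((G.induce Sᶜ).induce c.supp) X ≤ X.ncard) :=
  stmt6_general G S hS c
end

section
/- Let $G$ be a $P_4$-free non-complete graph with scattering number $s(G) \ge 0$ and let $S \subseteq V(G)$ be a maximal scattering set of $G$. Then for every proper subset $S^*$ of $S$, the set $S \setminus S^*$ is a maximal scattering set of the graph $G - S^*$. -/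
open SimpleGraph

/-!
Removing a part `S'` of a scattering set `S` identifies the cutsets `W` of `G - S'` with the
cutsets `S' ∪ W` of `G` containing `S'`, and
`c(G - S' - W) - |W| = c(G - (S' ∪ W)) - |S' ∪ W| + |S'|`.
Since `S ⊇ S'` attains `s(G)`, the right-hand side is maximised over all cutsets of `G` by
`W = S \ S'`, so scattering sets, and maximal ones, correspond under `W ↦ S' ∪ W`.
-/

section InduceCompl

variable {V : Type*} (G : SimpleGraph V) (S' : Set V)

lemma ncomps_induce_compl (W : Set ↥S'ᶜ) :
    ncomps (G.induce S'ᶜ) W = ncomps G (S' ∪ (↑) '' W) := by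
  apply Nat.card_congr
  apply Iso.connectedComponentEquiv
  refine ⟨{
    toFun := fun x => ⟨(x.1 : V), by
      rintro (h | ⟨y, hy, hyv⟩)
      · exact x.1.2 h
      · exact x.2 (by rwa [show y = x.1 from Subtype.ext hyv] at hy)⟩
    invFun := fun v => ⟨⟨(v : V), fun h => v.2 (Or.inl h)⟩, fun h => v.2 (Or.inr ⟨_, h, rfl⟩)⟩
    left_inv := fun _ => rfl
    right_inv := fun _ => rfl }, Iff.rfl⟩

lemma ncard_union_image_val [Finite V] (W : Set ↥S'ᶜ) :
    (S' ∪ (↑) '' W).ncard = S'.ncard + W.ncard := by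
  have hdisj : Disjoint S' (Subtype.val '' W) := by
    rw [Set.disjoint_left]
    rintro a ha ⟨y, _, rfl⟩
    exact y.2 ha
  rw [Set.ncard_union_eq hdisj, Set.ncard_image_of_injective _ Subtype.val_injective]

lemma ncomps_induce_compl_sub_ncard [Finite V] (W : Set ↥S'ᶜ) :
    (ncomps (G.induce S'ᶜ) W : ℤ) - W.ncard =
      (ncomps G (S' ∪ (↑) '' W) : ℤ) - (S' ∪ (↑) '' W).ncard + S'.ncard := by
  rw [ncomps_induce_compl, ncard_union_image_val]
  push_cast
  ring

lemma union_image_val_preimage_of_subset {S : Set V} (hS' : S' ⊆ S) :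
    S' ∪ (↑) '' ((↑) ⁻¹' S : Set ↥S'ᶜ) = S := by
  rw [Subtype.image_preimage_coe]
  ext v
  by_cases hv : v ∈ S'
  · simp [hv, hS' hv]
  · simp [hv]

lemma isScatSet_induce_compl_iff [Finite V] {S : Set V} (hS : IsScatSet G S) (hS' : S' ⊆ S)
    (W : Set ↥S'ᶜ) : IsScatSet (G.induce S'ᶜ) W ↔ IsScatSet G (S' ∪ (↑) '' W) := by
  have hvalue := ncomps_induce_compl_sub_ncard G S'
  have hS_eq := union_image_val_preimage_of_subset S' hS'
  constructor
  · rintro ⟨hW, hWmax⟩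
    refine ⟨by rwa [← ncomps_induce_compl], fun T hT => ?_⟩
    have hSW := hWmax ((↑) ⁻¹' S) (by rw [ncomps_induce_compl, hS_eq]; exact hS.1)
    rw [hvalue, hvalue, hS_eq] at hSW
    linarith [hS.2 T hT]
  · rintro ⟨hW, hWmax⟩
    refine ⟨by rwa [ncomps_induce_compl], fun T hT => ?_⟩
    rw [ncomps_induce_compl] at hT
    rw [hvalue, hvalue]
    linarith [hWmax _ hT]

end InduceCompl

theorem stmt7_general {V : Type*} [Fintype V] (G : SimpleGraph V)
    (S : Set V) (hS : IsMaxScatSet G S)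
    (S' : Set V) (hss : S' ⊂ S) :
    IsMaxScatSet (G.induce S'ᶜ) {v : ↥S'ᶜ | (v : V) ∈ S} := by
  change IsMaxScatSet (G.induce S'ᶜ) (Subtype.val ⁻¹' S)
  have hlift := isScatSet_induce_compl_iff G S' hS.1 hss.1
  have hS_eq := union_image_val_preimage_of_subset S' hss.1
  refine ⟨(hlift _).2 (by rw [hS_eq]; exact hS.1), fun T hT hST => hST.antisymm fun x hx => ?_⟩
  have hS_max : S = S' ∪ (↑) '' T := by
    refine hS.2 _ ((hlift T).1 hT) ?_
    calc S = S' ∪ (↑) '' (Subtype.val ⁻¹' S : Set ↥S'ᶜ) := hS_eq.symm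
      _ ⊆ S' ∪ (↑) '' T := Set.union_subset_union_right _ (Set.image_mono hST)
  show (x : V) ∈ S
  rw [hS_max]
  exact Or.inr (Set.mem_image_of_mem _ hx)

theorem stmt7 {V : Type*} [Fintype V] (G : SimpleGraph V) (hfree : P4Free G)
    (S : Set V) (hS : IsMaxScatSet G S) (h0 : S.ncard ≤ ncomps G S)
    (S' : Set V) (hss : S' ⊂ S) :
    IsMaxScatSet (G.induce S'ᶜ) {v : ↥S'ᶜ | (v : V) ∈ S} :=
  stmt7_general G S hS S' hss
end

section
/- Let $t \ge 2$ be a real number, $G$ a graph, and $S$ a cutset of $G$ such that $G$ is $t$-tough with respect to $S$. Set $r = \lfloor t/2 \rfloor$. Then for every component $D$ of $G-S$, the bipartite subgraph of $G$ consisting of all edges between $V(D)$ and $N_G(V(D)) \cap S$ contains a matching of size at least $\min\{|V(D)|, r\}$. -/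
/-!
By the deficiency version of Hall's theorem, if there is no matching of size
`k = min |V(D)| r`, some nonempty `X ⊆ V(D)` has `|V(D) \ X| + |N_S(X)| < k`. The set
`C = (V(D) \ X) ∪ N_S(X)` separates `X` from the other components of `G - S` and still leaves a
vertex of every component of `G - S`, so toughness with respect to `S` gives
`2t ≤ |C| < k ≤ t / 2`, which is absurd.
-/

open SimpleGraph

namespace Finset

variable {ι α : Type*} [DecidableEq α]

theorem exists_injective_of_card_le_card_biUnion_add [Fintype ι] (t : ι → Finset α) (d : ℕ)
    (h : ∀ s : Finset ι, #s ≤ #(s.biUnion t) + d) :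
    ∃ s : Finset ι, Fintype.card ι ≤ #s + d ∧
      ∃ f : s → α, Function.Injective f ∧ ∀ i : s, f i ∈ t i := by
  -- Pad every `t i` with `d` common dummy vertices and apply Hall's theorem.
  let t' : ι → Finset (α ⊕ Fin d) := fun i => (t i).map .inl ∪ univ.map .inr
  have hall : ∀ s : Finset ι, #s ≤ #(s.biUnion t') := by
    intro s
    obtain rfl | hs := s.eq_empty_or_nonempty
    · simp
    have : s.biUnion t' = (s.biUnion t).map .inl ∪ univ.map .inr := by
      ext (x | j)
      · simp [t']
      · simpa [t'] using hs.exists_mem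
    rw [this, card_union_of_disjoint (disjoint_map_inl_map_inr _ _)]
    simpa using h s
  obtain ⟨f, hf, hft⟩ := (all_card_le_biUnion_card_iff_exists_injective t').1 hall
  refine ⟨univ.filter fun i => (f i).isLeft, ?_,
    fun i => (f i).getLeft (mem_filter.1 i.2).2, ?_, fun i => ?_⟩
  · have hright : #(univ.filter fun i => ¬(f i).isLeft) ≤ d := by
      simpa using card_le_card_of_injOn f (t := univ.map .inr) (fun i hi => by
        obtain ⟨j, hj⟩ := Sum.isRight_iff.1 (by simpa using (mem_filter.1 hi).2)
        simp [hj]) hf.injOn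
    have := card_filter_add_card_filter_not (s := univ) (fun i => (f i).isLeft)
    rw [card_univ] at this
    omega
  · intro i j hij
    apply Subtype.ext (hf _)
    rw [← Sum.inl_getLeft (f i) (mem_filter.1 i.2).2,
      ← Sum.inl_getLeft (f j) (mem_filter.1 j.2).2]
    exact congrArg Sum.inl hij
  · obtain ⟨x, hx⟩ := Sum.isLeft_iff.1 (mem_filter.1 i.2).2
    have := hft i
    rw [hx] at this
    simpa [hx, t'] using this

theorem exists_matching_of_le_card_sdiff_add_card_biUnion [DecidableEq ι] {A : Finset ι}
    (t : ι → Finset α) {k : ℕ} (h : ∀ X ⊆ A, k ≤ #(A \ X) + #(X.biUnion t)) :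
    ∃ a : Fin k → ι, ∃ b : Fin k → α, Function.Injective a ∧ Function.Injective b ∧
      ∀ i, a i ∈ A ∧ b i ∈ t (a i) := by
  obtain ⟨s, hs, f, hf, hft⟩ :=
    exists_injective_of_card_le_card_biUnion_add (fun i : A => t i) (#A - k) fun s => by
      let X := s.map (.subtype _)
      have hXA : X ⊆ A := fun x hx => by obtain ⟨y, -, rfl⟩ := mem_map.1 hx; exact y.2
      have hX : X.biUnion t = s.biUnion fun i => t i := by ext; simp [X]
      have := h X hXA
      rw [card_sdiff_of_subset hXA, card_map, hX] at this
      have hsA : #s ≤ #A := by simpa using card_le_univ s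
      omega
  have hks : k ≤ #s := by have := h ∅ (empty_subset _); simp at this hs; omega
  let e : Fin k ↪ s := (Fin.castLEEmb hks).trans s.equivFin.symm.toEmbedding
  exact ⟨fun i => (e i : A), fun i => f (e i), fun i j hij => e.injective (Subtype.ext
    (Subtype.ext hij)), hf.comp e.injective, fun i => ⟨(e i : A).2, hft (e i)⟩⟩

end Finset

namespace SimpleGraph

variable {V : Type*} {G : SimpleGraph V}

theorem two_le_ncomps_of_forall_adj_mem [Finite V] {W X : Set V} {u v : V}
    (hX : ∀ x ∈ X, ∀ y, G.Adj x y → y ∈ X ∪ W) (hu : u ∈ X) (huW : u ∉ W)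
    (hv : v ∉ X ∪ W) :
    2 ≤ ncomps G W := by
  have hne : (G.induce Wᶜ).connectedComponentMk ⟨u, huW⟩ ≠
      (G.induce Wᶜ).connectedComponentMk ⟨v, fun h => hv (Or.inr h)⟩ := by
    intro huv
    obtain ⟨p⟩ := ConnectedComponent.exact huv
    obtain ⟨d, -, hdX, hdX'⟩ :=
      p.exists_boundary_dart (Subtype.val ⁻¹' X) hu fun h => hv (Or.inl h)
    exact (hX _ hdX _ d.adj).elim hdX' d.snd.2
  exact Finite.one_lt_card_iff_nontrivial.2 ⟨_, _, hne⟩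

def componentVerts {S : Set V} (c : (G.induce Sᶜ).ConnectedComponent) : Set V :=
  {v | ∃ h : v ∈ Sᶜ, (G.induce Sᶜ).connectedComponentMk ⟨v, h⟩ = c}

variable {S : Set V} {c : (G.induce Sᶜ).ConnectedComponent}

theorem mem_componentVerts {v : ↥Sᶜ} :
    (v : V) ∈ componentVerts c ↔ (G.induce Sᶜ).connectedComponentMk v = c :=
  ⟨fun ⟨_, h⟩ => h, fun h => ⟨v.2, h⟩⟩

theorem componentVerts_subset_compl : componentVerts c ⊆ Sᶜ := fun _ ⟨h, _⟩ => h

theorem mem_componentVerts_of_adj {u w : V} (hu : u ∈ componentVerts c) (huw : G.Adj u w)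
    (hw : w ∉ S) : w ∈ componentVerts c := by
  obtain ⟨hu, rfl⟩ := hu
  exact ⟨hw, ConnectedComponent.connectedComponentMk_eq_of_adj
    (G := G.induce Sᶜ) (v := ⟨w, hw⟩) (w := ⟨u, hu⟩) huw.symm⟩

theorem ToughWrt.mul_two_le_ncard [Finite V] {t : ℝ} (htough : ToughWrt t G S)
    (hS : IsCutset G S) (ht : 0 ≤ t) {X C : Set V} (hXc : X ⊆ componentVerts c)
    (hX : X.Nonempty) (hXC : Disjoint X C) (hCS : C ⊆ componentVerts c ∪ S)
    (hN : ∀ x ∈ X, ∀ y, G.Adj x y → y ∈ X ∪ C) :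
    t * 2 ≤ C.ncard := by
  obtain ⟨u, hu⟩ := hX
  have hout : ∀ v : ↥Sᶜ,
      (G.induce Sᶜ).connectedComponentMk v ≠ c → (v : V) ∉ X ∪ C := by
    rintro v hv (hvX | hvC)
    · exact hv (mem_componentVerts.1 (hXc hvX))
    · exact (hCS hvC).elim (fun h => hv (mem_componentVerts.1 h)) v.2
  have hcomps : 2 ≤ ncomps G C := by
    have : Nontrivial (G.induce Sᶜ).ConnectedComponent :=
      Finite.one_lt_card_iff_nontrivial.1 hS
    obtain ⟨c', hc'⟩ := exists_ne c
    induction c' using ConnectedComponent.ind with | h v => ?_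
    exact two_le_ncomps_of_forall_adj_mem hN hu (hXC.notMem_of_mem_left hu) (hout v hc')
  have hrep : ∀ c' : (G.induce Sᶜ).ConnectedComponent,
      ∃ v : ↥Sᶜ, (G.induce Sᶜ).connectedComponentMk v = c' ∧ (v : V) ∉ C := by
    intro c'
    by_cases hc' : c' = c
    · obtain ⟨huS, hmk⟩ := hXc hu
      exact ⟨⟨u, huS⟩, hmk.trans hc'.symm, hXC.notMem_of_mem_left hu⟩
    · induction c' using ConnectedComponent.ind with | h v => ?_
      exact ⟨v, rfl, fun h => hout v hc' (Or.inr h)⟩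
  calc t * 2 ≤ t * ncomps G C := by gcongr; exact_mod_cast hcomps
    _ ≤ C.ncard := htough C hcomps hrep

open Finset in
theorem ToughWrt.mul_two_le_card_sdiff_add_card_biUnion [Fintype V] [DecidableEq V] {t : ℝ}
    (htough : ToughWrt t G S) (hS : IsCutset G S) (ht : 0 ≤ t) {A : Finset V}
    (hA : (A : Set V) = componentVerts c) {N : V → Finset V}
    (hN : ∀ x y, y ∈ N x ↔ y ∈ S ∧ G.Adj x y) {X : Finset V} (hXA : X ⊆ A)
    (hX : X.Nonempty) :
    t * 2 ≤ #(A \ X) + #(X.biUnion N) := by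
  have hA' : ∀ {v}, v ∈ A ↔ v ∈ componentVerts c := by simp [← hA]
  have hAS : ∀ {v}, v ∈ A → v ∉ S := fun hv => componentVerts_subset_compl (hA'.1 hv)
  have hC : ∀ v, v ∈ (↑(A \ X ∪ X.biUnion N) : Set V) ↔
      (v ∈ A ∧ v ∉ X) ∨ ∃ x ∈ X, v ∈ N x := by
    simp
  have key := htough.mul_two_le_ncard hS ht (X := X) (C := ↑(A \ X ∪ X.biUnion N))
    (fun x hx => hA'.1 (hXA hx)) (by simpa using hX) ?disj ?sub ?closed
  case disj =>
    refine Set.disjoint_left.2 fun x hxX hxC => ?_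
    obtain ⟨-, hx⟩ | ⟨y, -, hyx⟩ := (hC x).1 hxC
    · exact hx hxX
    · exact hAS (hXA hxX) ((hN _ _).1 hyx).1
  case sub =>
    intro x hx
    obtain ⟨hxA, -⟩ | ⟨y, -, hyx⟩ := (hC x).1 hx
    · exact Or.inl (hA'.1 hxA)
    · exact Or.inr ((hN _ _).1 hyx).1
  case closed =>
    intro x hx y hxy
    rw [Set.mem_union, hC]
    by_cases hyS : y ∈ S
    · exact Or.inr (Or.inr ⟨x, hx, (hN _ _).2 ⟨hyS, hxy⟩⟩)
    · have hyA : y ∈ A := hA'.2 (mem_componentVerts_of_adj (hA'.1 (hXA hx)) hxy hyS)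
      by_cases hyX : y ∈ X
      · exact Or.inl hyX
      · exact Or.inr (Or.inl ⟨hyA, hyX⟩)
  rw [Set.ncard_coe_finset] at key
  exact key.trans (by exact_mod_cast card_union_le _ _)

end SimpleGraph

open Finset in
theorem stmt9_general {V : Type*} [Fintype V] (G : SimpleGraph V) (t : ℝ)
    (S : Set V) (hS : IsCutset G S) (htough : ToughWrt t G S)
    (c : (G.induce Sᶜ).ConnectedComponent) (A B : Set V)
    (hA : A = {v : V | ∃ h : v ∈ Sᶜ, (G.induce Sᶜ).connectedComponentMk ⟨v, h⟩ = c})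
    (hB : B = {v : V | v ∈ S ∧ ∃ u ∈ A, G.Adj v u}) :
    ∃ a b : Fin (min A.ncard ⌊t / 2⌋₊) → V,
      Function.Injective a ∧ Function.Injective b ∧
      ∀ i, a i ∈ A ∧ b i ∈ B ∧ G.Adj (a i) (b i) := by
  classical
  obtain rfl : A = componentVerts c := hA
  subst hB
  set k := min (componentVerts c).ncard ⌊t / 2⌋₊
  obtain hk | hk := k.eq_zero_or_pos
  · rw [hk]
    exact ⟨Fin.elim0, Fin.elim0, Function.injective_of_subsingleton _,
      Function.injective_of_subsingleton _, fun i => i.elim0⟩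
  have hkt : (k : ℝ) ≤ t / 2 := calc
    (k : ℝ) ≤ ⌊t / 2⌋₊ := by exact_mod_cast min_le_right _ _
    _ ≤ t / 2 := Nat.floor_le (Nat.pos_of_floor_pos (hk.trans_le (min_le_right _ _))).le
  have hk1 : (1 : ℝ) ≤ k := by exact_mod_cast hk
  let N : V → Finset V := fun x => univ.filter fun y => y ∈ S ∧ G.Adj x y
  have hHall : ∀ X ⊆ (componentVerts c).toFinset,
      k ≤ #((componentVerts c).toFinset \ X) + #(X.biUnion N) := by
    intro X hXA
    obtain rfl | hX := X.eq_empty_or_nonempty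
    · simp [k, Set.ncard_eq_toFinset_card']
    have := htough.mul_two_le_card_sdiff_add_card_biUnion (c := c) (N := N) hS (by linarith)
      (by simp) (fun x y => by simp [N]) hXA hX
    exact_mod_cast
      (by linarith : (k : ℝ) ≤ #((componentVerts c).toFinset \ X) + #(X.biUnion N))
  obtain ⟨a, b, ha, hb, hab⟩ := exists_matching_of_le_card_sdiff_add_card_biUnion N hHall
  refine ⟨a, b, ha, hb, fun i => ?_⟩
  obtain ⟨hai, hbi, hadj⟩ : a i ∈ componentVerts c ∧ b i ∈ S ∧ G.Adj (a i) (b i) := by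
    simpa [N] using hab i
  exact ⟨hai, ⟨hbi, a i, hai, hadj.symm⟩, hadj⟩

theorem stmt9 {V : Type*} [Fintype V] (G : SimpleGraph V) (t : ℝ) (ht : 2 ≤ t)
    (S : Set V) (hS : IsCutset G S) (htough : ToughWrt t G S)
    (c : (G.induce Sᶜ).ConnectedComponent) (A B : Set V)
    (hA : A = {v : V | ∃ h : v ∈ Sᶜ, (G.induce Sᶜ).connectedComponentMk ⟨v, h⟩ = c})
    (hB : B = {v : V | v ∈ S ∧ ∃ u ∈ A, G.Adj v u}) :
    ∃ a b : Fin (min A.ncard ⌊t / 2⌋₊) → V,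
      Function.Injective a ∧ Function.Injective b ∧
      ∀ i, a i ∈ A ∧ b i ∈ B ∧ G.Adj (a i) (b i) :=
  stmt9_general G t S hS htough c A B hA hB
end

section
/- Let $t > 0$ be a real number and let $G$ be a $t$-tough graph on $n$ vertices containing a non-Hamiltonian cycle $C$. If $H$ is a connected subgraph of $G - V(C)$ such that the number of vertices of $C$ having a neighbor in $H$ is greater than $\frac{n}{t+1} - 1$, then $G$ has a cycle $C^*$ with $V(C) \subseteq V(C^*)$ and $V(C^*) \cap V(H) \ne \emptyset$. -/
open SimpleGraph

/-! Let `W` be the set of vertices of `C` with a neighbour in `A = V(H)`, and `x⁺` the successor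
of `x` on `C`. If `x, x⁺ ∈ W` for some `x`, or `x⁺y⁺` is an edge for distinct `x, y ∈ W`, then
a path through all of `V(C)` joins two vertices of `W`, and closing it through a path in `H`
gives `C*`.
Otherwise `{x⁺ : x ∈ W}` together with a vertex of `H` is an independent set of size `|W| + 1`
(if `W = ∅`, take a vertex of `H` and one of `C`); removing all other vertices leaves that many
components, so `t`-toughness gives `(t + 1)(|W| + 1) ≤ n`, against the hypothesis. -/

section

variable {V : Type*} {G : SimpleGraph V}

lemma ncomps_compl_of_isIndepSet {I : Set V} (hI : G.IsIndepSet I) : ncomps G Iᶜ = I.ncard := by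
  have hbot : G.induce I = ⊥ := by
    ext ⟨x, hx⟩ ⟨y, hy⟩
    simp only [comap_adj, Function.Embedding.coe_subtype, bot_adj, iff_false]
    exact fun h ↦ hI hx hy h.ne h
  have hbij : Function.Bijective (⊥ : SimpleGraph I).connectedComponentMk :=
    ⟨fun _ _ h ↦ reachable_bot.1 (ConnectedComponent.eq.1 h), fun c ↦ c.exists_rep⟩
  rw [ncomps, compl_compl, hbot, ← Nat.card_eq_of_bijective _ hbij, Nat.card_coe_set_eq]

lemma Tough.add_one_mul_ncard_le [Fintype V] {t : ℝ} (h : Tough t G) {I : Set V}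
    (hI : G.IsIndepSet I) (hI2 : 2 ≤ I.ncard) : (t + 1) * I.ncard ≤ Fintype.card V := by
  have htI := h Iᶜ (by rwa [ncomps_compl_of_isIndepSet hI])
  rw [ncomps_compl_of_isIndepSet hI] at htI
  have hcard : I.ncard + Iᶜ.ncard = Fintype.card V := by
    rw [← Nat.card_eq_fintype_card]
    exact Set.ncard_add_ncard_compl I
  have : (I.ncard : ℝ) + Iᶜ.ncard = Fintype.card V := by exact_mod_cast hcard
  linarith

end

namespace SimpleGraph

variable {V : Type*} {G : SimpleGraph V}

lemma Connected.exists_isPath_of_induce {A : Set V} (hA : (G.induce A).Connected) {p q : V}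
    (hp : p ∈ A) (hq : q ∈ A) : ∃ P : G.Walk p q, P.IsPath ∧ ∀ z ∈ P.support, z ∈ A := by
  classical
  obtain ⟨w⟩ := hA.preconnected ⟨p, hp⟩ ⟨q, hq⟩
  refine ⟨(w.map (Embedding.induce A).toHom).bypass, Walk.bypass_isPath _, fun z hz ↦ ?_⟩
  obtain ⟨⟨z, hzA⟩, -, rfl⟩ :=
    List.mem_map.1 (Walk.support_map _ w ▸ Walk.support_bypass_subset_support _ hz)
  exact hzA

namespace Walk

lemma IsPath.exists_isCycle_of_adj_connected {A : Set V} (hA : (G.induce A).Connected)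
    {c d : V} {Q : G.Walk c d} (hQ : Q.IsPath) (hcd : c ≠ d) (hQA : ∀ z ∈ A, z ∉ Q.support)
    (hc : ∃ q ∈ A, G.Adj c q) (hd : ∃ p ∈ A, G.Adj d p) :
    ∃ (w : V) (C' : G.Walk w w), C'.IsCycle ∧ (∀ z ∈ Q.support, z ∈ C'.support) ∧
      ∃ y ∈ A, y ∈ C'.support := by
  obtain ⟨q, hqA, hcq⟩ := hc
  obtain ⟨p, hpA, hdp⟩ := hd
  obtain ⟨P, hP, hPA⟩ := hA.exists_isPath_of_induce hpA hqA
  let X : G.Walk p d := P.append (cons hcq.symm Q)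
  have hXpath : X.IsPath := by
    rw [isPath_def, support_append, support_cons, List.tail_cons]
    exact hP.support_nodup.append hQ.support_nodup fun z hzP hzQ ↦ hQA z (hPA z hzP) hzQ
  have hdpX : s(d, p) ∉ X.edges := by
    simp only [X, edges_append, edges_cons, List.mem_append, List.mem_cons, Sym2.eq_iff]
    rintro (h | (⟨rfl, rfl⟩ | ⟨rfl, rfl⟩) | h)
    · exact hQA d (hPA d (P.fst_mem_support_of_mem_edges h)) Q.end_mem_support
    · exact hQA d hqA Q.end_mem_support
    · exact hcd rfl
    · exact hQA p hpA (Q.snd_mem_support_of_mem_edges h)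
  refine ⟨d, cons hdp X, (cons_isCycle_iff X hdp).2 ⟨hXpath, hdpX⟩, fun z hz ↦ ?_,
    p, hpA, by simp⟩
  simp [X, hz]

variable {v x y : V} {C : G.Walk v v}

lemma mem_tail_support_iff (hC : ¬C.Nil) : x ∈ C.tail.support ↔ x ∈ C.support := by
  rw [← C.cons_support_tail hC, List.mem_cons]
  exact ⟨Or.inr, fun h ↦ h.elim (· ▸ C.tail.end_mem_support) id⟩

lemma IsCycle.fst_injOn_darts (hC : C.IsCycle) :
    Set.InjOn (fun d : G.Dart ↦ d.fst) {d | d ∈ C.darts} :=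
  fun _ hd _ hd' ↦ List.inj_on_of_nodup_map (C.map_fst_darts ▸ hC.nodup_dropLast_support) hd hd'

lemma IsCycle.snd_injOn_darts (hC : C.IsCycle) :
    Set.InjOn (fun d : G.Dart ↦ d.snd) {d | d ∈ C.darts} :=
  fun _ hd _ hd' ↦ List.inj_on_of_nodup_map (C.map_snd_darts ▸ hC.support_nodup) hd hd'

variable [DecidableEq V]

def cycleSucc (C : G.Walk v v) (x : V) : V :=
  if hx : x ∈ C.support then (C.rotate x hx).snd else x

lemma IsCycle.exists_mem_darts_cycleSucc (hC : C.IsCycle) (hx : x ∈ C.support) :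
    ∃ d ∈ C.darts, d.fst = x ∧ d.snd = C.cycleSucc x :=
  ⟨_, (C.rotate_darts x hx).mem_iff.1 (firstDart_mem_darts (hC.rotate hx).not_nil), rfl,
    by simp [cycleSucc, hx]⟩

lemma IsCycle.cycleSucc_eq_of_mem_darts (hC : C.IsCycle) {d : G.Dart} (hd : d ∈ C.darts) :
    C.cycleSucc d.fst = d.snd := by
  obtain ⟨d', hd', hfst, hsnd⟩ :=
    hC.exists_mem_darts_cycleSucc (C.dart_fst_mem_support_of_mem_darts hd)
  rw [← hsnd, hC.fst_injOn_darts hd' hd hfst]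

lemma IsCycle.adj_cycleSucc (hC : C.IsCycle) (hx : x ∈ C.support) : G.Adj x (C.cycleSucc x) := by
  obtain ⟨d, -, rfl, hd⟩ := hC.exists_mem_darts_cycleSucc hx
  exact hd ▸ d.adj

lemma IsCycle.cycleSucc_mem_support (hC : C.IsCycle) (hx : x ∈ C.support) :
    C.cycleSucc x ∈ C.support := by
  obtain ⟨d, hd, -, hdx⟩ := hC.exists_mem_darts_cycleSucc hx
  exact hdx ▸ C.dart_snd_mem_support_of_mem_darts hd

lemma IsCycle.cycleSucc_injOn (hC : C.IsCycle) : Set.InjOn C.cycleSucc {x | x ∈ C.support} := by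
  intro x hx y hy hxy
  obtain ⟨d, hd, rfl, hdx⟩ := hC.exists_mem_darts_cycleSucc hx
  obtain ⟨d', hd', rfl, hdy⟩ := hC.exists_mem_darts_cycleSucc hy
  rw [hC.snd_injOn_darts hd hd' (hdx.trans (hxy.trans hdy.symm))]

lemma IsCycle.exists_isPath_cycleSucc (hC : C.IsCycle) (hx : x ∈ C.support) :
    ∃ Q : G.Walk (C.cycleSucc x) x, Q.IsPath ∧ (∀ z, z ∈ Q.support ↔ z ∈ C.support) ∧
      ∀ d ∈ Q.darts, d ∈ C.darts := by
  have hD := hC.rotate hx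
  rw [cycleSucc, dif_pos hx]
  refine ⟨(C.rotate x hx).tail, hD.isPath_tail, fun z ↦ ?_, fun d hd ↦ ?_⟩
  · rw [mem_tail_support_iff hD.not_nil, mem_support_rotate_iff]
  · rw [darts_tail] at hd
    exact (C.rotate_darts x hx).mem_iff.1 (List.mem_of_mem_tail hd)

lemma IsCycle.exists_isPath_of_adj_cycleSucc (hC : C.IsCycle) (hx : x ∈ C.support)
    (hy : y ∈ C.support) (hxy : x ≠ y) (hadj : G.Adj (C.cycleSucc x) (C.cycleSucc y)) :
    ∃ Q : G.Walk y x, Q.IsPath ∧ ∀ z, z ∈ Q.support ↔ z ∈ C.support := by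
  obtain ⟨Q, hQ, hQC, hQdarts⟩ := hC.exists_isPath_cycleSucc hx
  obtain ⟨q, r, hq, hr, rfl⟩ := hQ.mem_support_iff_exists_append.1 ((hQC y).2 hy)
  obtain ⟨w, h, r, rfl⟩ := not_nil_iff.1 (not_nil_of_ne (p := r) hxy.symm)
  obtain rfl : C.cycleSucc y = w :=
    hC.cycleSucc_eq_of_mem_darts (d := ⟨(y, w), h⟩) (hQdarts _ (by simp))
  have hdisj : q.support.Disjoint r.support := by
    simpa using hQ.disjoint_support_of_append not_nil_cons
  -- `y ⋯ x⁺` backwards along `C`, the chord `x⁺y⁺`, then `y⁺ ⋯ x` forwards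
  refine ⟨q.reverse.append (cons hadj r), ?_, fun z ↦ ?_⟩
  · rw [isPath_def, support_append, support_cons, List.tail_cons, support_reverse]
    exact (List.nodup_reverse.2 hq.support_nodup).append hr.of_cons.support_nodup
      fun a ha hb ↦ hdisj (List.mem_reverse.1 ha) hb
  · rw [← hQC]
    simp only [mem_support_append_iff, support_reverse, List.mem_reverse, support_cons,
      List.mem_cons]
    grind [start_mem_support, end_mem_support]

lemma IsCycle.exists_isIndepSet_of_cycleSucc (hC : C.IsCycle) {W : Set V} {a : V}
    (hWC : ∀ x ∈ W, x ∈ C.support) (haC : a ∉ C.support)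
    (haW : ∀ x ∈ C.support, G.Adj x a → x ∈ W)
    (hsucc : ∀ x ∈ W, C.cycleSucc x ∉ W)
    (hchord : ∀ x ∈ W, ∀ y ∈ W, x ≠ y → ¬G.Adj (C.cycleSucc x) (C.cycleSucc y)) :
    ∃ I : Set V, G.IsIndepSet I ∧ 2 ≤ I.ncard ∧ W.ncard + 1 ≤ I.ncard := by
  rcases W.eq_empty_or_nonempty with rfl | hW
  · have hav : a ≠ v := fun h ↦ haC (h ▸ C.start_mem_support)
    refine ⟨{a, v}, Set.pairwise_pair.2 fun _ ↦ ⟨?_, ?_⟩, by rw [Set.ncard_pair hav], by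
      rw [Set.ncard_pair hav]; simp⟩
    · exact fun h ↦ haW v C.start_mem_support h.symm
    · exact fun h ↦ haW v C.start_mem_support h
  have hWfin : W.Finite := C.support.finite_toSet.subset hWC
  have hnot_adj : ∀ x ∈ W, ¬G.Adj a (C.cycleSucc x) := fun x hx h ↦
    hsucc x hx (haW _ (hC.cycleSucc_mem_support (hWC x hx)) h.symm)
  have haI : a ∉ C.cycleSucc '' W := by
    rintro ⟨x, hx, rfl⟩
    exact haC (hC.cycleSucc_mem_support (hWC x hx))
  have hcard : (insert a (C.cycleSucc '' W)).ncard = W.ncard + 1 := by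
    rw [Set.ncard_insert_of_notMem haI (hWfin.image _),
      (hC.cycleSucc_injOn.mono hWC).ncard_image]
  refine ⟨insert a (C.cycleSucc '' W), Set.pairwise_insert.2 ⟨?_, ?_⟩, ?_, hcard.ge⟩
  · rintro _ ⟨x, hx, rfl⟩ _ ⟨y, hy, rfl⟩ hne
    exact hchord x hx y hy (fun h ↦ hne (h ▸ rfl))
  · rintro _ ⟨x, hx, rfl⟩ -
    exact ⟨hnot_adj x hx, fun h ↦ hnot_adj x hx h.symm⟩
  · rw [hcard]
    have := (Set.ncard_pos hWfin).2 hW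
    omega

end Walk

end SimpleGraph

theorem stmt13_general {V : Type*} [Fintype V] (G : SimpleGraph V) (t : ℝ) (ht : 0 < t)
    (htough : Tough t G)
    (v0 : V) (C : G.Walk v0 v0) (hC : C.IsCycle)
    (A : Set V) (hdisj : ∀ x ∈ A, x ∉ C.support) (hconn : (G.induce A).Connected)
    (hnbr : (Fintype.card V : ℝ) / (t + 1) - 1 <
      ({v : V | v ∈ C.support ∧ ∃ u ∈ A, G.Adj v u}.ncard : ℝ)) :
    ∃ (w : V) (C' : G.Walk w w), C'.IsCycle ∧ (∀ x ∈ C.support, x ∈ C'.support) ∧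
      ∃ y ∈ A, y ∈ C'.support := by
  classical
  set W := {v : V | v ∈ C.support ∧ ∃ u ∈ A, G.Adj v u}
  have extend : ∀ c ∈ W, ∀ d ∈ W, c ≠ d → ∀ Q : G.Walk c d, Q.IsPath →
      (∀ z, z ∈ Q.support ↔ z ∈ C.support) → ∃ (w : V) (C' : G.Walk w w), C'.IsCycle ∧
        (∀ x ∈ C.support, x ∈ C'.support) ∧ ∃ y ∈ A, y ∈ C'.support := by
    intro c hc d hd hcd Q hQ hQC
    simp only [← hQC] at hdisj ⊢
    exact hQ.exists_isCycle_of_adj_connected hconn hcd hdisj hc.2 hd.2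
  by_cases hsucc : ∃ x ∈ W, C.cycleSucc x ∈ W
  · obtain ⟨x, hx, hsx⟩ := hsucc
    obtain ⟨Q, hQ, hQC, -⟩ := hC.exists_isPath_cycleSucc hx.1
    exact extend _ hsx x hx (hC.adj_cycleSucc hx.1).ne.symm Q hQ hQC
  by_cases hchord : ∃ x ∈ W, ∃ y ∈ W, x ≠ y ∧ G.Adj (C.cycleSucc x) (C.cycleSucc y)
  · obtain ⟨x, hx, y, hy, hxy, hadj⟩ := hchord
    obtain ⟨Q, hQ, hQC⟩ := hC.exists_isPath_of_adj_cycleSucc hx.1 hy.1 hxy hadj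
    exact extend y hy x hx hxy.symm Q hQ hQC
  push Not at hsucc hchord
  obtain ⟨a, haA⟩ := hconn.nonempty
  obtain ⟨I, hI, hI2, hWI⟩ := hC.exists_isIndepSet_of_cycleSucc (W := W) (fun x hx ↦ hx.1)
    (hdisj a haA) (fun x hx hxa ↦ ⟨hx, a, haA, hxa⟩) hsucc hchord
  have hupper := htough.add_one_mul_ncard_le hI hI2
  have hlower : (Fintype.card V : ℝ) < (t + 1) * (W.ncard + 1) := by
    rw [div_sub_one (by positivity), div_lt_iff₀ (by positivity)] at hnbr
    linarith
  have : (W.ncard + 1 : ℝ) ≤ I.ncard := by exact_mod_cast hWI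
  nlinarith

theorem stmt13 {V : Type*} [Fintype V] (G : SimpleGraph V) (t : ℝ) (ht : 0 < t)
    (htough : Tough t G)
    (v0 : V) (C : G.Walk v0 v0) (hC : C.IsCycle) (hnonham : ∃ x : V, x ∉ C.support)
    (A : Set V) (hdisj : ∀ x ∈ A, x ∉ C.support) (hconn : (G.induce A).Connected)
    (hnbr : (Fintype.card V : ℝ) / (t + 1) - 1 <
      ({v : V | v ∈ C.support ∧ ∃ u ∈ A, G.Adj v u}.ncard : ℝ)) :
    ∃ (w : V) (C' : G.Walk w w), C'.IsCycle ∧ (∀ x ∈ C.support, x ∈ C'.support) ∧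
      ∃ y ∈ A, y ∈ C'.support :=
  stmt13_general G t ht htough v0 C hC A hdisj hconn hnbr
end

section
/- Let $G$ be a $(P_4 \cup P_1)$-free graph on $n$ vertices and let $S = \{v \in V(G) : d_G(v) \ge n/4\}$. Then the graph $G - S$ is $P_4$-free. -/
open SimpleGraph

/-
If four vertices `a, b, c, d` induce a `P₄` in a `(P₄ ∪ P₁)`-free graph, every vertex of the graph
is adjacent to one of them, since otherwise it would complete an induced `P₄ ∪ P₁`. Hence
`n ≤ d(a) + d(b) + d(c) + d(d)`, so one of the four has degree at least `n / 4`: an induced `P₄`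
cannot avoid the high-degree vertices.
-/

lemma P4P1_adj_castSucc (i j : Fin 4) :
    P4P1.Adj i.castSucc j.castSucc ↔ (pathGraph 4).Adj i j := by
  simp only [P4P1, fromEdgeSet_adj, Set.mem_insert_iff, Set.mem_singleton_iff, Sym2.eq_iff,
    pathGraph_adj]
  fin_cases i <;> fin_cases j <;> decide

lemma P4P1_not_adj_last (i : Fin 5) : ¬P4P1.Adj (Fin.last 4) i := by
  simp only [P4P1, fromEdgeSet_adj, Set.mem_insert_iff, Set.mem_singleton_iff, Sym2.eq_iff]
  fin_cases i <;> decide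

lemma pathGraph_four_exists_adj (i : Fin 4) : ∃ j, (pathGraph 4).Adj i j := by
  fin_cases i <;> simp [pathGraph_adj, Fin.exists_fin_succ]

lemma P4P1Free.exists_adj_of_pathGraph_embedding {V : Type*} {G : SimpleGraph V}
    (hfree : P4P1Free G) (f : pathGraph 4 ↪g G) (v : V) : ∃ i, G.Adj (f i) v := by
  by_contra! hv
  have hv_ne : ∀ i, f i ≠ v := by
    intro i hi
    obtain ⟨j, hij⟩ := pathGraph_four_exists_adj i
    exact hv j (hi ▸ (f.map_adj_iff.mpr hij).symm)
  let g : Fin 5 → V := Fin.lastCases v fun i => f i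
  have hg : ∀ i j, G.Adj (g i) (g j) ↔ P4P1.Adj i j := by
    intro i j
    induction i using Fin.lastCases <;> induction j using Fin.lastCases <;>
      simp only [g, Fin.lastCases_last, Fin.lastCases_castSucc, G.irrefl, P4P1.irrefl,
        P4P1_adj_castSucc, f.map_adj_iff, hv, G.adj_comm v, P4P1.adj_comm _ (Fin.last 4),
        P4P1_not_adj_last]
  have g_inj : Function.Injective g := by
    intro i j hij
    induction i using Fin.lastCases <;> induction j using Fin.lastCases <;>
      simp only [g, Fin.lastCases_last, Fin.lastCases_castSucc] at hij
    · rfl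
    · exact absurd hij.symm (hv_ne _)
    · exact absurd hij (hv_ne _)
    · rw [f.injective hij]
  exact hfree.false ⟨⟨g, g_inj⟩, hg _ _⟩

lemma card_le_sum_degree_of_forall_exists_adj {V ι : Type*} [Fintype V] [Fintype ι]
    {G : SimpleGraph V} [DecidableRel G.Adj] (f : ι → V) (hf : ∀ v, ∃ i, G.Adj (f i) v) :
    Fintype.card V ≤ ∑ i, G.degree (f i) := by
  classical
  calc Fintype.card V
      ≤ (Finset.univ.biUnion fun i => G.neighborFinset (f i)).card := by
        rw [← Finset.card_univ]
        refine Finset.card_le_card fun v _ => ?_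
        simpa using hf v
    _ ≤ ∑ i, G.degree (f i) := Finset.card_biUnion_le

theorem stmt17 {V : Type*} [Fintype V] (G : SimpleGraph V) [DecidableRel G.Adj]
    (hfree : P4P1Free G) :
    P4Free (G.induce {v : V | (Fintype.card V : ℝ) / 4 ≤ (G.degree v : ℝ)}ᶜ) := by
  refine ⟨fun f => ?_⟩
  set n := Fintype.card V
  let g : pathGraph 4 ↪g G := (Embedding.induce _).comp f
  have hlow : ∀ i, (G.degree (g i) : ℝ) < n / 4 := fun i => not_le.mp (f i).2
  have hcover : (n : ℝ) ≤ ∑ i, (G.degree (g i) : ℝ) := by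
    exact_mod_cast
      card_le_sum_degree_of_forall_exists_adj g (hfree.exists_adj_of_pathGraph_embedding g)
  have hsum : ∑ i, (G.degree (g i) : ℝ) < ∑ _i : Fin 4, (n : ℝ) / 4 :=
    Finset.sum_lt_sum_of_nonempty Finset.univ_nonempty fun i _ => hlow i
  simp only [Finset.sum_const, Finset.card_univ, Fintype.card_fin, nsmul_eq_mul] at hsum
  linarith
end

section
/- Let $G$ be a $(P_4 \cup P_1)$-free graph and $S$ a cutset of $G$ such that $G-S$ has at least three components. Let $D_1$ be a component of $G-S$ and let $x \in S$ be a vertex having a neighbor in $D_1$ and also a neighbor in some component of $G-S$ other than $D_1$. If $x$ is not adjacent to every vertex of $D_1$, then $x$ is adjacent to every vertex of every component of $G-S$ other than $D_1$. -/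
open SimpleGraph

/-! Since `D₁` is connected and `x` sees some but not all of it, `D₁` contains an edge `ab`
with `x ~ a` and `x ≁ b`. A neighbour `y` of `x` outside `D₁` and a non-neighbour `z` of `x`
in a third component would give the induced `P₄ ∪ P₁` formed by `b - a - x - y` and `z`. If
the non-neighbour `w` lies in the component of the given neighbour outside `D₁`, then by the
same argument `x` sees a vertex `z` of a third component, and `b - a - x - z` plus `w` is the
forbidden graph. -/

theorem Function.Injective.of_adj_iff {W V : Type*} {H : SimpleGraph W} {G : SimpleGraph V}
    {f : W → V} (hf : ∀ i j, G.Adj (f i) (f j) ↔ H.Adj i j)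
    (hH : ∀ i j, i ≠ j → ∃ k, ¬(H.Adj k i ↔ H.Adj k j)) : Function.Injective f := by
  intro i j hij
  by_contra hne
  obtain ⟨k, hk⟩ := hH i j hne
  exact hk (by rw [← hf, ← hf, hij])

theorem SimpleGraph.Reachable.exists_adj_boundary {W : Type*} {H : SimpleGraph W} {u v : W}
    (h : H.Reachable u v) (P : W → Prop) (hu : P u) (hv : ¬P v) :
    ∃ a b, H.Adj a b ∧ H.Reachable u a ∧ P a ∧ ¬P b := by
  classical
  obtain ⟨p⟩ := h
  obtain ⟨d, hd, ha, hb⟩ := p.exists_boundary_dart {z | P z} hu hv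
  exact ⟨d.fst, d.snd, d.adj, ⟨p.takeUntil d.fst (p.dart_fst_mem_support_of_mem_darts hd)⟩,
    ha, hb⟩

theorem SimpleGraph.not_adj_of_connectedComponentMk_induce_ne {V : Type*} {G : SimpleGraph V}
    {s : Set V} {u v : s}
    (h : (G.induce s).connectedComponentMk u ≠ (G.induce s).connectedComponentMk v) :
    ¬G.Adj u v := fun hadj =>
  h (ConnectedComponent.connectedComponentMk_eq_of_adj (by simpa using hadj))

theorem exists_ne_ne_of_three_le_natCard {α : Type*} (h : 3 ≤ Nat.card α) (a b : α) :
    ∃ c, c ≠ a ∧ c ≠ b := by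
  by_contra! hc
  have hsurj : Function.Surjective ![a, b] := fun c => by
    by_cases hca : c = a
    · exact ⟨0, hca.symm⟩
    · exact ⟨1, (hc c hca).symm⟩
  have := Nat.card_le_card_of_surjective _ hsurj
  rw [Nat.card_fin] at this
  omega

theorem P4P1Free.false_of_path_of_isolated {V : Type*} {G : SimpleGraph V} (hfree : P4P1Free G)
    {v₀ v₁ v₂ v₃ v₄ : V} (h01 : G.Adj v₀ v₁) (h12 : G.Adj v₁ v₂) (h23 : G.Adj v₂ v₃)
    (h02 : ¬G.Adj v₀ v₂) (h03 : ¬G.Adj v₀ v₃) (h13 : ¬G.Adj v₁ v₃)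
    (h04 : ¬G.Adj v₀ v₄) (h14 : ¬G.Adj v₁ v₄) (h24 : ¬G.Adj v₂ v₄) (h34 : ¬G.Adj v₃ v₄) :
    False := by
  have hf (i j : Fin 5) :
      G.Adj (![v₀, v₁, v₂, v₃, v₄] i) (![v₀, v₁, v₂, v₃, v₄] j) ↔ P4P1.Adj i j := by
    fin_cases i <;> fin_cases j <;> simp_all [P4P1, G.adj_comm]
  have hinj : Function.Injective ![v₀, v₁, v₂, v₃, v₄] :=
    Function.Injective.of_adj_iff hf (by unfold P4P1; decide)
  exact hfree.false ⟨⟨_, hinj⟩, hf _ _⟩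

theorem P4P1Free.adj_of_adj_of_mixed_component {V : Type*} {G : SimpleGraph V} {s : Set V}
    (hfree : P4P1Free G)
    {c : (G.induce s).ConnectedComponent} {x : V} {a b y z : s}
    (hab : G.Adj a b) (hac : (G.induce s).connectedComponentMk a = c)
    (hbc : (G.induce s).connectedComponentMk b = c) (hxa : G.Adj x a) (hxb : ¬G.Adj x b)
    (hxy : G.Adj x y) (hyc : (G.induce s).connectedComponentMk y ≠ c)
    (hzc : (G.induce s).connectedComponentMk z ≠ c)
    (hzy : (G.induce s).connectedComponentMk z ≠ (G.induce s).connectedComponentMk y) :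
    G.Adj x z := by
  by_contra hxz
  have hcross {u v : s} (hu : (G.induce s).connectedComponentMk u = c)
      (hv : (G.induce s).connectedComponentMk v ≠ c) : ¬G.Adj u v :=
    not_adj_of_connectedComponentMk_induce_ne (by rw [hu]; exact Ne.symm hv)
  exact hfree.false_of_path_of_isolated hab.symm hxa.symm hxy (fun h => hxb h.symm)
    (hcross hbc hyc) (hcross hac hyc) (hcross hbc hzc) (hcross hac hzc) hxz
    (not_adj_of_connectedComponentMk_induce_ne (Ne.symm hzy))

theorem stmt18_general {V : Type*} (G : SimpleGraph V) (hfree : P4P1Free G)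
    (S : Set V)
    (hthree : 3 ≤ Nat.card (G.induce Sᶜ).ConnectedComponent)
    (c1 : (G.induce Sᶜ).ConnectedComponent) (x : V)
    (h1 : ∃ u : ↥Sᶜ, (G.induce Sᶜ).connectedComponentMk u = c1 ∧ G.Adj x (u : V))
    (h2 : ∃ u : ↥Sᶜ, (G.induce Sᶜ).connectedComponentMk u ≠ c1 ∧ G.Adj x (u : V))
    (h3 : ∃ u : ↥Sᶜ, (G.induce Sᶜ).connectedComponentMk u = c1 ∧ ¬ G.Adj x (u : V)) :
    ∀ w : ↥Sᶜ, (G.induce Sᶜ).connectedComponentMk w ≠ c1 → G.Adj x (w : V) := by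
  obtain ⟨u₁, hu₁, hxu₁⟩ := h1
  obtain ⟨y, hyc, hxy⟩ := h2
  obtain ⟨u₃, hu₃, hxu₃⟩ := h3
  obtain ⟨a, b, hab, hu₁a, hxa, hxb⟩ :=
    (ConnectedComponent.exact (hu₁.trans hu₃.symm)).exists_adj_boundary
      (fun v => G.Adj x v) hxu₁ hxu₃
  have hac : (G.induce Sᶜ).connectedComponentMk a = c1 :=
    (ConnectedComponent.sound hu₁a).symm.trans hu₁
  have hbc := (ConnectedComponent.connectedComponentMk_eq_of_adj hab).symm.trans hac
  have hmixed {y z : ↥Sᶜ} := hfree.adj_of_adj_of_mixed_component (y := y) (z := z)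
    (by simpa using hab) hac hbc hxa hxb
  intro w hwc
  by_cases hwy : (G.induce Sᶜ).connectedComponentMk w = (G.induce Sᶜ).connectedComponentMk y
  · obtain ⟨c₃, hc₃, hc₃w⟩ := exists_ne_ne_of_three_le_natCard hthree c1
      ((G.induce Sᶜ).connectedComponentMk w)
    obtain ⟨z, rfl⟩ := c₃.exists_rep
    have hxz := hmixed hxy hyc hc₃ (hwy ▸ hc₃w)
    exact hmixed hxz hc₃ hwc (Ne.symm hc₃w)
  · exact hmixed hxy hyc hwc hwy

theorem stmt18 {V : Type*} [Fintype V] (G : SimpleGraph V) (hfree : P4P1Free G)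
    (S : Set V) (hS : IsCutset G S)
    (hthree : 3 ≤ Nat.card (G.induce Sᶜ).ConnectedComponent)
    (c1 : (G.induce Sᶜ).ConnectedComponent) (x : V) (hx : x ∈ S)
    (h1 : ∃ u : ↥Sᶜ, (G.induce Sᶜ).connectedComponentMk u = c1 ∧ G.Adj x (u : V))
    (h2 : ∃ u : ↥Sᶜ, (G.induce Sᶜ).connectedComponentMk u ≠ c1 ∧ G.Adj x (u : V))
    (h3 : ∃ u : ↥Sᶜ, (G.induce Sᶜ).connectedComponentMk u = c1 ∧ ¬ G.Adj x (u : V)) :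
    ∀ w : ↥Sᶜ, (G.induce Sᶜ).connectedComponentMk w ≠ c1 → G.Adj x (w : V) :=
  stmt18_general G hfree S hthree c1 x h1 h2 h3
end
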